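/- (Observation 1, lexicographic path decomposition.) Let T be a finite rooted ordered tree and let T^c be its leftmost path decomposition, where the chosen root-to-leaf path always descends to the leftmost child, and the subtrees hanging off the chosen path are attached as children of the corresponding node of T^c in bottom-to-top order (the subtree hanging off the deepest path node first). Then the depth-first (preorder) sequence of the nodes of T^c corresponds, under the node-to-leaf correspondence of the path decomposition, to the left-to-right sequence of the leaves of T. -/

import Mathlib

/-- A finite rooted ordered tree whose every node carries a label in `α`
(we use the labels only to track the identity of the leaves). -/
inductive LTree (α : Type) : Type where
  | node : α → List (LTree α) → LTree α

namespace LTree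

variable {α : Type}

-- The labels of the leaves of a tree, in left-to-right (depth-first) order.
mutual
def leafLabels : LTree α → List α
  | .node a [] => [a]
  | .node _ (c :: cs) => leafLabels c ++ leafLabelsList cs
def leafLabelsList : List (LTree α) → List α
  | [] => []
  | t :: ts => leafLabels t ++ leafLabelsList ts
end

-- The labels of all nodes of a tree in depth-first (preorder) order.
mutual
def preorder : LTree α → List α
  | .node a cs => a :: preorderList cs
def preorderList : List (LTree α) → List α
  | [] => []
  | t :: ts => preorder t ++ preorderList ts
end

-- The leftmost path decomposition of a tree: the chosen root-to-leaf path always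
-- descends to the leftmost child, each node of the decomposition is labeled with the
-- label of the leaf ending its represented path, and the subtrees hanging off the chosen
-- path are attached as children in bottom-to-top order (those hanging off the deepest
-- path node first, and the off-path children of each path node left-to-right).
mutual
def leftmostDecomp : LTree α → LTree α
  | .node a [] => .node a []
  | .node _ (c :: cs) =>
    match leftmostDecomp c with
    | .node b hs => .node b (hs ++ leftmostDecompList cs)
def leftmostDecompList : List (LTree α) → List (LTree α)
  | [] => []
  | t :: ts => leftmostDecomp t :: leftmostDecompList ts
end

theorem preorderList_append (xs ys : List (LTree α)) :
    preorderList (xs ++ ys) = preorderList xs ++ preorderList ys := by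
  induction xs with
  | nil => rfl
  | cons x xs ih => rw [List.cons_append, preorderList, preorderList, ih, List.append_assoc]

/- The decomposition of `node a (c :: cs)` is that of `c` with the decompositions of `cs`
appended to the root's children, so in preorder they come after all of `c`'s decomposition. -/
theorem preorder_leftmostDecomp_cons (a : α) (c : LTree α) (cs : List (LTree α)) :
    preorder (leftmostDecomp (.node a (c :: cs))) =
      preorder (leftmostDecomp c) ++ preorderList (leftmostDecompList cs) := by
  rw [leftmostDecomp]
  rcases leftmostDecomp c with ⟨b, hs⟩
  rw [preorder, preorder, preorderList_append, List.cons_append]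

mutual
theorem preorder_leftmostDecomp : ∀ t : LTree α, preorder (leftmostDecomp t) = leafLabels t
  | .node _ [] => rfl
  | .node a (c :: cs) => by
    rw [preorder_leftmostDecomp_cons, preorder_leftmostDecomp c,
      preorderList_leftmostDecompList cs, leafLabels]
theorem preorderList_leftmostDecompList : ∀ ts : List (LTree α),
    preorderList (leftmostDecompList ts) = leafLabelsList ts
  | [] => rfl
  | t :: ts => by
    rw [leftmostDecompList, preorderList, leafLabelsList, preorder_leftmostDecomp t,
      preorderList_leftmostDecompList ts]
end

end LTree

/-- Observation 1: the depth-first (preorder) sequence of the nodes of the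
leftmost path decomposition of `t` corresponds, under the node-to-leaf correspondence
(each decomposition node being labeled by the leaf ending its path), to the
left-to-right sequence of the leaves of `t`. -/
theorem leftmost_decomposition_preorder {α : Type} (t : LTree α) :
    LTree.preorder (LTree.leftmostDecomp t) = LTree.leafLabels t :=
  LTree.preorder_leftmostDecomp t
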